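/- arXiv:1903.08846 — 9 statements merged into one kernel-verified Lean document; each statement's English description precedes it below -/
import Mathlib

section
/- Let f(x) = a₄x⁴ + a₃x³ + a₂x² + a₁x + a₀ with a₄ a square, say a₄ = c² with c ≠ 0 (working over a field of characteristic ≠ 2). Let (x₁,y₁), (x₂,y₂) be points with y₁² = f(x₁), y₂² = f(x₂), x₁ ≠ x₂, and let P(x) = c·x² + b₁x + b₀ be the unique polynomial of this form with P(x₁) = y₁ and P(x₂) = y₂. Then the polynomial f(x) − P(x)² has degree at most 3 with leading coefficient a₃ − 2b₁c, and if a₃ − 2b₁c ≠ 0, it factors as (a₃ − 2b₁c)(x − x₁)(x − x₂)(x − x₃) where x₃ = −x₁ − x₂ − (2b₀c + b₁² − a₂)/(2b₁c − a₃). -/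
/-- Abel's polynomial construction: the polynomial `f - P²`, where `P` is the
parabola of leading coefficient `c = √a₄` interpolating two distinct points on
the quartic curve `y² = f(x)`, has degree at most 3 with leading coefficient
`a₃ - 2b₁c`, and, when that coefficient is nonzero, factors through the two
abscissas and the third abscissa `x₃` given by Vieta. -/
theorem abel_polynomial_factorization {K : Type*} [Field K] (h2 : (2 : K) ≠ 0)
    (a4 a3 a2 a1 a0 c : K) (hc : c ≠ 0) (ha4 : a4 = c ^ 2)
    (x1 y1 x2 y2 b1 b0 : K) (hx : x1 ≠ x2)
    (hy1 : y1 ^ 2 = a4 * x1 ^ 4 + a3 * x1 ^ 3 + a2 * x1 ^ 2 + a1 * x1 + a0)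
    (hy2 : y2 ^ 2 = a4 * x2 ^ 4 + a3 * x2 ^ 3 + a2 * x2 ^ 2 + a1 * x2 + a0)
    (hP1 : c * x1 ^ 2 + b1 * x1 + b0 = y1)
    (hP2 : c * x2 ^ 2 + b1 * x2 + b0 = y2) :
    (∃ c2 c1 c0 : K, ∀ x : K,
      (a4 * x ^ 4 + a3 * x ^ 3 + a2 * x ^ 2 + a1 * x + a0)
          - (c * x ^ 2 + b1 * x + b0) ^ 2
        = (a3 - 2 * b1 * c) * x ^ 3 + c2 * x ^ 2 + c1 * x + c0) ∧
    (a3 - 2 * b1 * c ≠ 0 → ∀ x : K,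
      (a4 * x ^ 4 + a3 * x ^ 3 + a2 * x ^ 2 + a1 * x + a0)
          - (c * x ^ 2 + b1 * x + b0) ^ 2
        = (a3 - 2 * b1 * c) * (x - x1) * (x - x2) *
            (x - (-x1 - x2 - (2 * b0 * c + b1 ^ 2 - a2) / (2 * b1 * c - a3)))) := by
  subst ha4
  constructor
  · exact ⟨a2 - 2 * b0 * c - b1 ^ 2, a1 - 2 * b1 * b0, a0 - b0 ^ 2, fun x => by ring⟩
  intro hL x
  have hd : x1 - x2 ≠ 0 := sub_ne_zero.mpr hx
  have hL' : 2 * b1 * c - a3 ≠ 0 := fun h => hL (by linear_combination -h)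
  set u : K := (2 * b0 * c + b1 ^ 2 - a2) / (2 * b1 * c - a3) with hu_def
  have hu : u * (2 * b1 * c - a3) = 2 * b0 * c + b1 ^ 2 - a2 :=
    div_mul_cancel₀ _ hL'
  have h1 : c ^ 2 * x1 ^ 4 + a3 * x1 ^ 3 + a2 * x1 ^ 2 + a1 * x1 + a0
      - (c * x1 ^ 2 + b1 * x1 + b0) ^ 2 = 0 := by
    rw [hP1, ← hy1]; ring
  have h2' : c ^ 2 * x2 ^ 4 + a3 * x2 ^ 3 + a2 * x2 ^ 2 + a1 * x2 + a0
      - (c * x2 ^ 2 + b1 * x2 + b0) ^ 2 = 0 := by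
    rw [hP2, ← hy2]; ring
  have hα : (x1 - x2) * (a1 - 2 * b1 * b0
      - (a3 - 2 * b1 * c) * (x1 * x2 + (-x1 - x2 - u) * (x1 + x2))) = 0 := by
    linear_combination h1 - h2' - (x1 ^ 2 - x2 ^ 2) * hu
  have hα' : a1 - 2 * b1 * b0
      - (a3 - 2 * b1 * c) * (x1 * x2 + (-x1 - x2 - u) * (x1 + x2)) = 0 :=
    (mul_eq_zero.mp hα).resolve_left hd
  have hβ : a0 - b0 ^ 2 + (a3 - 2 * b1 * c) * (x1 * x2 * (-x1 - x2 - u)) = 0 := by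
    linear_combination h1 - x1 ^ 2 * hu - x1 * hα'
  linear_combination x ^ 2 * hu + x * hα' + hβ
end

section
/- Under the hypotheses of Abel's polynomial construction (f quartic with leading coefficient c², points (x₁,y₁), (x₂,y₂) on y² = f(x) with x₁ ≠ x₂, interpolating parabola P(x) = c·x² + b₁x + b₀, and x₃ defined by Vieta), the point (x₃, y₃) with y₃ = −P(x₃) lies on the curve, i.e., y₃² = f(x₃). -/
/-- Closure of the addition law in Abel's polynomial construction: the third
intersection point `(x₃, y₃)` with `y₃ = -P(x₃)` lies on the curve `y² = f(x)`. -/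
theorem abel_third_point_on_curve {K : Type*} [Field K] (h2 : (2 : K) ≠ 0)
    (a4 a3 a2 a1 a0 c : K) (hc : c ≠ 0) (ha4 : a4 = c ^ 2)
    (x1 y1 x2 y2 b1 b0 : K) (hx : x1 ≠ x2)
    (hy1 : y1 ^ 2 = a4 * x1 ^ 4 + a3 * x1 ^ 3 + a2 * x1 ^ 2 + a1 * x1 + a0)
    (hy2 : y2 ^ 2 = a4 * x2 ^ 4 + a3 * x2 ^ 3 + a2 * x2 ^ 2 + a1 * x2 + a0)
    (hP1 : c * x1 ^ 2 + b1 * x1 + b0 = y1)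
    (hP2 : c * x2 ^ 2 + b1 * x2 + b0 = y2)
    (hlead : a3 - 2 * b1 * c ≠ 0)
    (x3 y3 : K)
    (hx3 : x3 = -x1 - x2 - (2 * b0 * c + b1 ^ 2 - a2) / (2 * b1 * c - a3))
    (hy3 : y3 = -(c * x3 ^ 2 + b1 * x3 + b0)) :
    y3 ^ 2 = a4 * x3 ^ 4 + a3 * x3 ^ 3 + a2 * x3 ^ 2 + a1 * x3 + a0 := by
  have hl2 : 2 * b1 * c - a3 ≠ 0 := fun h => hlead (by linear_combination -h)
  have hd : x1 - x2 ≠ 0 := sub_ne_zero.mpr hx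
  have h1 : (a3 - 2*b1*c)*x1^3 + (a2 - b1^2 - 2*b0*c)*x1^2 + (a1 - 2*b1*b0)*x1
      + (a0 - b0^2) = 0 := by
    linear_combination -hy1 - (c*x1^2 + b1*x1 + b0 + y1)*hP1 - x1^4*ha4
  have h2' : (a3 - 2*b1*c)*x2^3 + (a2 - b1^2 - 2*b0*c)*x2^2 + (a1 - 2*b1*b0)*x2
      + (a0 - b0^2) = 0 := by
    linear_combination -hy2 - (c*x2^2 + b1*x2 + b0 + y2)*hP2 - x2^4*ha4
  have hC : (x1 - x2) * ((a3 - 2*b1*c)*(x1^2 + x1*x2 + x2^2)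
      + (a2 - b1^2 - 2*b0*c)*(x1 + x2) + (a1 - 2*b1*b0)) = 0 := by
    linear_combination h1 - h2'
  have hC' : (a3 - 2*b1*c)*(x1^2 + x1*x2 + x2^2)
      + (a2 - b1^2 - 2*b0*c)*(x1 + x2) + (a1 - 2*b1*b0) = 0 :=
    (mul_eq_zero.mp hC).resolve_left hd
  have hsum : (a3 - 2*b1*c)*(x1 + x2 + x3) = b1^2 + 2*b0*c - a2 := by
    rw [hx3]; field_simp; ring
  linear_combination (y3 - (c*x3^2 + b1*x3 + b0))*hy3 - x3^4*ha4
    - (x3^2 - (x1 + x2)*x3 + x1*x2)*hsum - (x3 - x1)*hC' - h1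
end

section
/- For the planar Kepler problem in elliptic coordinates, with a₄ = I₁, a₃ = −α, a₂ = I₂ − κ²I₁, x₁ = u₁, y₁ = (u₁² − κ²)p₁, x₂ = u₂, y₂ = (u₂² − κ²)p₂, where I₁ = ((u₁² − κ²)p₁² − (u₂² − κ²)p₂²)/(u₁² − u₂²) + α/(u₁ + u₂) and I₂ = (−u₂²(u₁² − κ²)p₁² + u₁²(u₂² − κ²)p₂²)/(u₁² − u₂²) + αu₁u₂/(u₁ + u₂), Euler's integral C = ((y₁ − y₂)/(x₁ − x₂))² − a₄(x₁ + x₂)² − a₃(x₁ + x₂) equals ((u₁² − κ²)(u₂² − κ²)(p₁ − p₂)²)/((u₁ − u₂)²). -/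
/-- For the planar Kepler problem in elliptic coordinates, Euler's integral
`C = ((y₁-y₂)/(x₁-x₂))² - a₄(x₁+x₂)² - a₃(x₁+x₂)` with `a₄ = I₁`, `a₃ = -α`,
`x₁ = u₁`, `y₁ = (u₁²-κ²)p₁`, `x₂ = u₂`, `y₂ = (u₂²-κ²)p₂` equals the square of
angular momentum `(u₁²-κ²)(u₂²-κ²)(p₁-p₂)²/(u₁-u₂)²`. -/
theorem kepler_euler_integral (κ α u1 u2 p1 p2 I1 I2 : ℝ)
    (hne : u1 ^ 2 ≠ u2 ^ 2) (hsum : u1 + u2 ≠ 0)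
    (hI1 : I1 = ((u1 ^ 2 - κ ^ 2) * p1 ^ 2 - (u2 ^ 2 - κ ^ 2) * p2 ^ 2) / (u1 ^ 2 - u2 ^ 2)
        + α / (u1 + u2))
    (hI2 : I2 = (-u2 ^ 2 * (u1 ^ 2 - κ ^ 2) * p1 ^ 2 + u1 ^ 2 * (u2 ^ 2 - κ ^ 2) * p2 ^ 2)
          / (u1 ^ 2 - u2 ^ 2) + α * u1 * u2 / (u1 + u2)) :
    (((u1 ^ 2 - κ ^ 2) * p1 - (u2 ^ 2 - κ ^ 2) * p2) / (u1 - u2)) ^ 2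
        - I1 * (u1 + u2) ^ 2 - (-α) * (u1 + u2)
      = (u1 ^ 2 - κ ^ 2) * (u2 ^ 2 - κ ^ 2) * (p1 - p2) ^ 2 / (u1 - u2) ^ 2 := by
  have hd : u1 - u2 ≠ 0 := fun h => hne (by rw [sub_eq_zero] at h; rw [h])
  have hd2 : u1 ^ 2 - u2 ^ 2 ≠ 0 := sub_ne_zero.mpr hne
  subst hI1
  field_simp
  ring
end

section
/- The two Kepler first integrals in elliptic coordinates, I₁ = ((u₁² − κ²)p₁² − (u₂² − κ²)p₂²)/(u₁² − u₂²) + α/(u₁ + u₂) and I₂ = (−u₂²(u₁² − κ²)p₁² + u₁²(u₂² − κ²)p₂²)/(u₁² − u₂²) + αu₁u₂/(u₁ + u₂), Poisson-commute: {I₁, I₂} = 0, where {F,G} = ∂F/∂u₁·∂G/∂p₁ − ∂F/∂p₁·∂G/∂u₁ + ∂F/∂u₂·∂G/∂p₂ − ∂F/∂p₂·∂G/∂u₂. -/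
/-!
In elliptic coordinates the Kepler problem separates: with `f(u, p) = (u² - κ²) p² + α u`, the
pair `(I₁, I₂)` is, wherever `u₁² ≠ u₂²`, the solution of the Stäckel relations
`f(uᵢ, pᵢ) = uᵢ² I₁ + I₂` (`i = 1, 2`). Any two functions obtained in this way from separated data
`fᵢ(uᵢ, pᵢ)`, `gᵢ(uᵢ)` Poisson-commute, by the quotient rule and a polynomial identity; as the
bracket only sees the functions near the point, this gives the theorem.
-/

/-- Canonical Poisson bracket of two functions on `T*ℝ²` with canonical
coordinates `(u₁, u₂, p₁, p₂)`. -/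
noncomputable def poissonBracket (F G : ℝ → ℝ → ℝ → ℝ → ℝ) (u1 u2 p1 p2 : ℝ) : ℝ :=
  deriv (fun x => F x u2 p1 p2) u1 * deriv (fun x => G u1 u2 x p2) p1
  - deriv (fun x => F u1 u2 x p2) p1 * deriv (fun x => G x u2 p1 p2) u1
  + deriv (fun x => F u1 x p1 p2) u2 * deriv (fun x => G u1 u2 p1 x) p2
  - deriv (fun x => F u1 u2 p1 x) p2 * deriv (fun x => G u1 x p1 p2) u2

/-- Kepler integral `I₁` (twice the Hamiltonian) in elliptic coordinates. -/
noncomputable def keplerI1 (κ α : ℝ) : ℝ → ℝ → ℝ → ℝ → ℝ := fun u1 u2 p1 p2 =>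
  ((u1 ^ 2 - κ ^ 2) * p1 ^ 2 - (u2 ^ 2 - κ ^ 2) * p2 ^ 2) / (u1 ^ 2 - u2 ^ 2)
    + α / (u1 + u2)

/-- Kepler integral `I₂` in elliptic coordinates. -/
noncomputable def keplerI2 (κ α : ℝ) : ℝ → ℝ → ℝ → ℝ → ℝ := fun u1 u2 p1 p2 =>
  (-u2 ^ 2 * (u1 ^ 2 - κ ^ 2) * p1 ^ 2 + u1 ^ 2 * (u2 ^ 2 - κ ^ 2) * p2 ^ 2)
      / (u1 ^ 2 - u2 ^ 2) + α * u1 * u2 / (u1 + u2)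

/-- `stackelI1` and `stackelI2` are the solution `(I₁, I₂)` of the separation relations
`fᵢ(uᵢ, pᵢ) = gᵢ(uᵢ) I₁ + I₂`, `i = 1, 2`. -/
noncomputable def stackelI1 (f₁ f₂ : ℝ → ℝ → ℝ) (g₁ g₂ : ℝ → ℝ) : ℝ → ℝ → ℝ → ℝ → ℝ :=
  fun u1 u2 p1 p2 => (f₁ u1 p1 - f₂ u2 p2) / (g₁ u1 - g₂ u2)

noncomputable def stackelI2 (f₁ f₂ : ℝ → ℝ → ℝ) (g₁ g₂ : ℝ → ℝ) : ℝ → ℝ → ℝ → ℝ → ℝ :=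
  fun u1 u2 p1 p2 => (g₁ u1 * f₂ u2 p2 - g₂ u2 * f₁ u1 p1) / (g₁ u1 - g₂ u2)

open Filter Topology in
theorem poissonBracket_congr {F F' G G' : ℝ → ℝ → ℝ → ℝ → ℝ} {u1 u2 : ℝ}
    (hF : ∀ᶠ u in 𝓝 (u1, u2), ∀ p1 p2, F u.1 u.2 p1 p2 = F' u.1 u.2 p1 p2)
    (hG : ∀ᶠ u in 𝓝 (u1, u2), ∀ p1 p2, G u.1 u.2 p1 p2 = G' u.1 u.2 p1 p2) (p1 p2 : ℝ) :
    poissonBracket F G u1 u2 p1 p2 = poissonBracket F' G' u1 u2 p1 p2 := by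
  have h₁ : Tendsto (fun x => (x, u2)) (𝓝 u1) (𝓝 (u1, u2)) :=
    tendsto_id.prodMk_nhds tendsto_const_nhds
  have h₂ : Tendsto (fun x => (u1, x)) (𝓝 u2) (𝓝 (u1, u2)) :=
    tendsto_const_nhds.prodMk_nhds tendsto_id
  have hF₀ : F u1 u2 = F' u1 u2 := funext₂ hF.self_of_nhds
  have hG₀ : G u1 u2 = G' u1 u2 := funext₂ hG.self_of_nhds
  unfold poissonBracket
  rw [EventuallyEq.deriv_eq ((h₁.eventually hF).mono fun x hx => hx p1 p2),
    EventuallyEq.deriv_eq ((h₁.eventually hG).mono fun x hx => hx p1 p2),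
    EventuallyEq.deriv_eq ((h₂.eventually hF).mono fun x hx => hx p1 p2),
    EventuallyEq.deriv_eq ((h₂.eventually hG).mono fun x hx => hx p1 p2), hF₀, hG₀]

theorem poissonBracket_stackelI1_stackelI2 {f₁ f₂ : ℝ → ℝ → ℝ} {g₁ g₂ : ℝ → ℝ}
    {u1 u2 p1 p2 : ℝ} (hu1 : DifferentiableAt ℝ (f₁ · p1) u1)
    (hp1 : DifferentiableAt ℝ (f₁ u1) p1) (hu2 : DifferentiableAt ℝ (f₂ · p2) u2)
    (hp2 : DifferentiableAt ℝ (f₂ u2) p2) (hg₁ : DifferentiableAt ℝ g₁ u1)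
    (hg₂ : DifferentiableAt ℝ g₂ u2) (hg : g₁ u1 ≠ g₂ u2) :
    poissonBracket (stackelI1 f₁ f₂ g₁ g₂) (stackelI2 f₁ f₂ g₁ g₂) u1 u2 p1 p2 = 0 := by
  have hD : g₁ u1 - g₂ u2 ≠ 0 := sub_ne_zero.mpr hg
  unfold poissonBracket stackelI1 stackelI2
  simp only [((hu1.hasDerivAt.sub_const _).fun_div (hg₁.hasDerivAt.sub_const _) hD).deriv,
    ((hp1.hasDerivAt.sub_const _).div_const _).deriv,
    ((hu2.hasDerivAt.const_sub _).fun_div (hg₂.hasDerivAt.const_sub _) hD).deriv,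
    ((hp2.hasDerivAt.const_sub _).div_const _).deriv,
    (((hg₁.hasDerivAt.mul_const _).fun_sub (hu1.hasDerivAt.const_mul _)).fun_div
      (hg₁.hasDerivAt.sub_const _) hD).deriv,
    (((hp1.hasDerivAt.const_mul _).const_sub _).div_const _).deriv,
    (((hp2.hasDerivAt.const_mul _).sub_const _).div_const _).deriv,
    (((hu2.hasDerivAt.const_mul _).fun_sub (hg₂.hasDerivAt.mul_const _)).fun_div
      (hg₂.hasDerivAt.const_sub _) hD).deriv]
  field_simp
  ring

def keplerSeparated (κ α u p : ℝ) : ℝ := (u ^ 2 - κ ^ 2) * p ^ 2 + α * u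

theorem keplerI1_eq_stackelI1 (κ α : ℝ) {u1 u2 : ℝ} (h : u1 ^ 2 ≠ u2 ^ 2) (p1 p2 : ℝ) :
    keplerI1 κ α u1 u2 p1 p2 =
      stackelI1 (keplerSeparated κ α) (keplerSeparated κ α) (· ^ 2) (· ^ 2) u1 u2 p1 p2 := by
  have hsum : u1 + u2 ≠ 0 := fun h0 => h (by rw [eq_neg_of_add_eq_zero_left h0]; ring)
  have hD : u1 ^ 2 - u2 ^ 2 ≠ 0 := sub_ne_zero.mpr h
  unfold keplerI1 stackelI1 keplerSeparated
  field_simp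
  ring

theorem keplerI2_eq_stackelI2 (κ α : ℝ) {u1 u2 : ℝ} (h : u1 ^ 2 ≠ u2 ^ 2) (p1 p2 : ℝ) :
    keplerI2 κ α u1 u2 p1 p2 =
      stackelI2 (keplerSeparated κ α) (keplerSeparated κ α) (· ^ 2) (· ^ 2) u1 u2 p1 p2 := by
  have hsum : u1 + u2 ≠ 0 := fun h0 => h (by rw [eq_neg_of_add_eq_zero_left h0]; ring)
  have hD : u1 ^ 2 - u2 ^ 2 ≠ 0 := sub_ne_zero.mpr h
  unfold keplerI2 stackelI2 keplerSeparated
  field_simp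
  ring

open Filter Topology in
theorem kepler_integrals_commute_general (κ α : ℝ) (u1 u2 p1 p2 : ℝ)
    (hne : u1 ^ 2 ≠ u2 ^ 2) :
    poissonBracket (keplerI1 κ α) (keplerI2 κ α) u1 u2 p1 p2 = 0 := by
  have hnear : ∀ᶠ u : ℝ × ℝ in 𝓝 (u1, u2), u.1 ^ 2 ≠ u.2 ^ 2 :=
    (isOpen_ne_fun (by fun_prop) (by fun_prop)).mem_nhds hne
  rw [poissonBracket_congr (hnear.mono fun u hu => keplerI1_eq_stackelI1 κ α hu)
    (hnear.mono fun u hu => keplerI2_eq_stackelI2 κ α hu)]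
  unfold keplerSeparated
  exact poissonBracket_stackelI1_stackelI2 (by fun_prop) (by fun_prop) (by fun_prop)
    (by fun_prop) (by fun_prop) (by fun_prop) hne

/-- The two Kepler first integrals in elliptic coordinates Poisson-commute. -/
theorem kepler_integrals_commute (κ α : ℝ) (u1 u2 p1 p2 : ℝ)
    (hne : u1 ^ 2 ≠ u2 ^ 2) (hsum : u1 + u2 ≠ 0) :
    poissonBracket (keplerI1 κ α) (keplerI2 κ α) u1 u2 p1 p2 = 0 :=
  kepler_integrals_commute_general κ α u1 u2 p1 p2 hne
end

section
/- For the 2D harmonic oscillator in elliptic coordinates, I₁ = ((u₁² − κ²)p₁² − (u₂² − κ²)p₂²)/(u₁² − u₂²) + α²(κ² − u₁² − u₂²) and I₂ = (−u₂²(u₁² − κ²)p₁² + u₁²(u₂² − κ²)p₂²)/(u₁² − u₂²) + α²u₁²u₂² Poisson-commute: {I₁, I₂} = 0. -/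
/-- Oscillator integral `I₁` (twice the Hamiltonian) in elliptic coordinates. -/
noncomputable def oscI1 (κ α : ℝ) : ℝ → ℝ → ℝ → ℝ → ℝ := fun u1 u2 p1 p2 =>
  ((u1 ^ 2 - κ ^ 2) * p1 ^ 2 - (u2 ^ 2 - κ ^ 2) * p2 ^ 2) / (u1 ^ 2 - u2 ^ 2)
    + α ^ 2 * (κ ^ 2 - u1 ^ 2 - u2 ^ 2)

/-- Oscillator integral `I₂` in elliptic coordinates. -/
noncomputable def oscI2 (κ α : ℝ) : ℝ → ℝ → ℝ → ℝ → ℝ := fun u1 u2 p1 p2 =>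
  (-u2 ^ 2 * (u1 ^ 2 - κ ^ 2) * p1 ^ 2 + u1 ^ 2 * (u2 ^ 2 - κ ^ 2) * p2 ^ 2)
      / (u1 ^ 2 - u2 ^ 2) + α ^ 2 * u1 ^ 2 * u2 ^ 2

/-- The 2D harmonic oscillator integrals in elliptic coordinates
Poisson-commute. -/
theorem oscillator_integrals_commute (κ α : ℝ) (u1 u2 p1 p2 : ℝ)
    (hne : u1 ^ 2 ≠ u2 ^ 2) :
    poissonBracket (oscI1 κ α) (oscI2 κ α) u1 u2 p1 p2 = 0 := by
  have hden : u1 ^ 2 - u2 ^ 2 ≠ 0 := sub_ne_zero.mpr hne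
  have hx1 : HasDerivAt (fun x : ℝ => x ^ 2) (2 * u1) u1 := by
    simpa using hasDerivAt_pow 2 u1
  have hx2 : HasDerivAt (fun x : ℝ => x ^ 2) (2 * u2) u2 := by
    simpa using hasDerivAt_pow 2 u2
  have hq1 : HasDerivAt (fun x : ℝ => x ^ 2) (2 * p1) p1 := by
    simpa using hasDerivAt_pow 2 p1
  have hq2 : HasDerivAt (fun x : ℝ => x ^ 2) (2 * p2) p2 := by
    simpa using hasDerivAt_pow 2 p2
  -- ∂I1/∂u1
  have h1u1 : HasDerivAt
      (fun x => ((x ^ 2 - κ ^ 2) * p1 ^ 2 - (u2 ^ 2 - κ ^ 2) * p2 ^ 2) / (x ^ 2 - u2 ^ 2)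
        + α ^ 2 * (κ ^ 2 - x ^ 2 - u2 ^ 2))
      ((2 * u1 * p1 ^ 2 * (u1 ^ 2 - u2 ^ 2)
          - ((u1 ^ 2 - κ ^ 2) * p1 ^ 2 - (u2 ^ 2 - κ ^ 2) * p2 ^ 2) * (2 * u1))
          / (u1 ^ 2 - u2 ^ 2) ^ 2
        + α ^ 2 * -(2 * u1)) u1 := by
    exact ((((hx1.sub_const (κ ^ 2)).mul_const (p1 ^ 2)).sub_const _).div
        (hx1.sub_const (u2 ^ 2)) hden).add
      ((((hx1.const_sub (κ ^ 2)).sub_const (u2 ^ 2)).const_mul (α ^ 2)))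
  -- ∂I1/∂u2
  have h1u2 : HasDerivAt
      (fun x => ((u1 ^ 2 - κ ^ 2) * p1 ^ 2 - (x ^ 2 - κ ^ 2) * p2 ^ 2) / (u1 ^ 2 - x ^ 2)
        + α ^ 2 * (κ ^ 2 - u1 ^ 2 - x ^ 2))
      ((-(2 * u2 * p2 ^ 2) * (u1 ^ 2 - u2 ^ 2)
          - ((u1 ^ 2 - κ ^ 2) * p1 ^ 2 - (u2 ^ 2 - κ ^ 2) * p2 ^ 2) * (-(2 * u2)))
          / (u1 ^ 2 - u2 ^ 2) ^ 2
        + α ^ 2 * (-(2 * u2))) u2 := by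
    exact ((((hx2.sub_const (κ ^ 2)).mul_const (p2 ^ 2)).const_sub _).div
        (hx2.const_sub (u1 ^ 2)) hden).add
      ((hx2.const_sub (κ ^ 2 - u1 ^ 2)).const_mul (α ^ 2))
  -- ∂I1/∂p1
  have h1p1 : HasDerivAt
      (fun x => ((u1 ^ 2 - κ ^ 2) * x ^ 2 - (u2 ^ 2 - κ ^ 2) * p2 ^ 2) / (u1 ^ 2 - u2 ^ 2)
        + α ^ 2 * (κ ^ 2 - u1 ^ 2 - u2 ^ 2))
      ((u1 ^ 2 - κ ^ 2) * (2 * p1) / (u1 ^ 2 - u2 ^ 2)) p1 := by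
    exact ((((hq1.const_mul (u1 ^ 2 - κ ^ 2)).sub_const _).div_const _).add_const _)
  -- ∂I1/∂p2
  have h1p2 : HasDerivAt
      (fun x => ((u1 ^ 2 - κ ^ 2) * p1 ^ 2 - (u2 ^ 2 - κ ^ 2) * x ^ 2) / (u1 ^ 2 - u2 ^ 2)
        + α ^ 2 * (κ ^ 2 - u1 ^ 2 - u2 ^ 2))
      (-((u2 ^ 2 - κ ^ 2) * (2 * p2)) / (u1 ^ 2 - u2 ^ 2)) p2 := by
    exact ((((hq2.const_mul (u2 ^ 2 - κ ^ 2)).const_sub _).div_const _).add_const _)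
  -- ∂I2/∂u1
  have h2u1 : HasDerivAt
      (fun x => (-u2 ^ 2 * (x ^ 2 - κ ^ 2) * p1 ^ 2 + x ^ 2 * (u2 ^ 2 - κ ^ 2) * p2 ^ 2)
          / (x ^ 2 - u2 ^ 2) + α ^ 2 * x ^ 2 * u2 ^ 2)
      (((-u2 ^ 2 * (2 * u1) * p1 ^ 2 + 2 * u1 * (u2 ^ 2 - κ ^ 2) * p2 ^ 2)
            * (u1 ^ 2 - u2 ^ 2)
          - (-u2 ^ 2 * (u1 ^ 2 - κ ^ 2) * p1 ^ 2 + u1 ^ 2 * (u2 ^ 2 - κ ^ 2) * p2 ^ 2)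
            * (2 * u1)) / (u1 ^ 2 - u2 ^ 2) ^ 2
        + α ^ 2 * (2 * u1) * u2 ^ 2) u1 := by
    exact (((((hx1.sub_const (κ ^ 2)).const_mul (-u2 ^ 2)).mul_const (p1 ^ 2)).add
        ((hx1.mul_const (u2 ^ 2 - κ ^ 2)).mul_const (p2 ^ 2))).div
        (hx1.sub_const (u2 ^ 2)) hden).add
      ((hx1.const_mul (α ^ 2)).mul_const (u2 ^ 2))
  -- ∂I2/∂u2
  have h2u2 : HasDerivAt
      (fun x => (-x ^ 2 * (u1 ^ 2 - κ ^ 2) * p1 ^ 2 + u1 ^ 2 * (x ^ 2 - κ ^ 2) * p2 ^ 2)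
          / (u1 ^ 2 - x ^ 2) + α ^ 2 * u1 ^ 2 * x ^ 2)
      (((-(2 * u2) * (u1 ^ 2 - κ ^ 2) * p1 ^ 2 + u1 ^ 2 * (2 * u2) * p2 ^ 2)
            * (u1 ^ 2 - u2 ^ 2)
          - (-u2 ^ 2 * (u1 ^ 2 - κ ^ 2) * p1 ^ 2 + u1 ^ 2 * (u2 ^ 2 - κ ^ 2) * p2 ^ 2)
            * (-(2 * u2))) / (u1 ^ 2 - u2 ^ 2) ^ 2
        + α ^ 2 * u1 ^ 2 * (2 * u2)) u2 := by
    exact ((((hx2.neg.mul_const (u1 ^ 2 - κ ^ 2)).mul_const (p1 ^ 2)).add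
        (((hx2.sub_const (κ ^ 2)).const_mul (u1 ^ 2)).mul_const (p2 ^ 2))).div
        (hx2.const_sub (u1 ^ 2)) hden).add
      (hx2.const_mul (α ^ 2 * u1 ^ 2))
  -- ∂I2/∂p1
  have h2p1 : HasDerivAt
      (fun x => (-u2 ^ 2 * (u1 ^ 2 - κ ^ 2) * x ^ 2 + u1 ^ 2 * (u2 ^ 2 - κ ^ 2) * p2 ^ 2)
          / (u1 ^ 2 - u2 ^ 2) + α ^ 2 * u1 ^ 2 * u2 ^ 2)
      (-u2 ^ 2 * (u1 ^ 2 - κ ^ 2) * (2 * p1) / (u1 ^ 2 - u2 ^ 2)) p1 := by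
    exact (((hq1.const_mul (-u2 ^ 2 * (u1 ^ 2 - κ ^ 2))).add_const _).div_const _).add_const _
  -- ∂I2/∂p2
  have h2p2 : HasDerivAt
      (fun x => (-u2 ^ 2 * (u1 ^ 2 - κ ^ 2) * p1 ^ 2 + u1 ^ 2 * (u2 ^ 2 - κ ^ 2) * x ^ 2)
          / (u1 ^ 2 - u2 ^ 2) + α ^ 2 * u1 ^ 2 * u2 ^ 2)
      (u1 ^ 2 * (u2 ^ 2 - κ ^ 2) * (2 * p2) / (u1 ^ 2 - u2 ^ 2)) p2 := by
    exact (((hq2.const_mul (u1 ^ 2 * (u2 ^ 2 - κ ^ 2))).const_add _).div_const _).add_const _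
  simp only [poissonBracket, oscI1, oscI2]
  rw [h1u1.deriv, h1u2.deriv, h1p1.deriv, h1p2.deriv, h2u1.deriv, h2u2.deriv,
    h2p1.deriv, h2p2.deriv]
  field_simp
  ring
end

section
/- For the harmonic oscillator, the movable points (x₁, y₁) = (u₁², (u₁² − κ²)u₁p₁) and (x₂, y₂) = (u₂², (u₂² − κ²)u₂p₂) lie on the elliptic curve y² = f(x) with f(x) = α²x⁴ + (I₁ − 2α²κ²)x³ + (α²κ⁴ − I₁κ² + I₂)x² − κ²I₂x, where I₁ and I₂ are the oscillator integrals in elliptic coordinates. -/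
/-- The movable points `(u₁², (u₁²-κ²)u₁p₁)` and `(u₂², (u₂²-κ²)u₂p₂)` of the
harmonic oscillator lie on the elliptic curve
`y² = α²x⁴ + (I₁ - 2α²κ²)x³ + (α²κ⁴ - I₁κ² + I₂)x² - κ²I₂x`. -/
theorem oscillator_points_on_curve (κ α u1 u2 p1 p2 I1 I2 : ℝ)
    (hne : u1 ^ 2 ≠ u2 ^ 2)
    (hI1 : I1 = ((u1 ^ 2 - κ ^ 2) * p1 ^ 2 - (u2 ^ 2 - κ ^ 2) * p2 ^ 2)
          / (u1 ^ 2 - u2 ^ 2) + α ^ 2 * (κ ^ 2 - u1 ^ 2 - u2 ^ 2))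
    (hI2 : I2 = (-u2 ^ 2 * (u1 ^ 2 - κ ^ 2) * p1 ^ 2
            + u1 ^ 2 * (u2 ^ 2 - κ ^ 2) * p2 ^ 2) / (u1 ^ 2 - u2 ^ 2)
          + α ^ 2 * u1 ^ 2 * u2 ^ 2) :
    ((u1 ^ 2 - κ ^ 2) * u1 * p1) ^ 2
        = α ^ 2 * (u1 ^ 2) ^ 4 + (I1 - 2 * α ^ 2 * κ ^ 2) * (u1 ^ 2) ^ 3
          + (α ^ 2 * κ ^ 4 - I1 * κ ^ 2 + I2) * (u1 ^ 2) ^ 2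
          - κ ^ 2 * I2 * u1 ^ 2 ∧
    ((u2 ^ 2 - κ ^ 2) * u2 * p2) ^ 2
        = α ^ 2 * (u2 ^ 2) ^ 4 + (I1 - 2 * α ^ 2 * κ ^ 2) * (u2 ^ 2) ^ 3
          + (α ^ 2 * κ ^ 4 - I1 * κ ^ 2 + I2) * (u2 ^ 2) ^ 2
          - κ ^ 2 * I2 * u2 ^ 2 := by
  have hd : u1 ^ 2 - u2 ^ 2 ≠ 0 := sub_ne_zero.mpr hne
  subst hI1 hI2
  constructor <;> field_simp <;> ring
end

section
/- The Drach (h) system integrals I₁ = (p₁² − p₂²)/(u₁² − u₂²) − α(u₁² + u₂²) − β(u₁² + u₁u₂ + u₂²)/(u₁ + u₂) − γ/(u₁ + u₂) and I₂ = (u₂²p₁² − u₁²p₂²)/(u₁² − u₂²) − αu₁²u₂² − βu₁²u₂²/(u₁ + u₂) + γu₁u₂/(u₁ + u₂) satisfy the separated relations p_i² = αu_i⁴ + βu_i³ + I₁u_i² + γu_i − I₂ for i = 1, 2, and moreover {I₁, I₂} = 0 for the canonical Poisson bracket. -/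
/-- Drach (h) system integral `I₁`. -/
noncomputable def drachI1 (α β γ : ℝ) : ℝ → ℝ → ℝ → ℝ → ℝ := fun u1 u2 p1 p2 =>
  (p1 ^ 2 - p2 ^ 2) / (u1 ^ 2 - u2 ^ 2) - α * (u1 ^ 2 + u2 ^ 2)
    - β * (u1 ^ 2 + u1 * u2 + u2 ^ 2) / (u1 + u2) - γ / (u1 + u2)

/-- Drach (h) system integral `I₂`. -/
noncomputable def drachI2 (α β γ : ℝ) : ℝ → ℝ → ℝ → ℝ → ℝ := fun u1 u2 p1 p2 =>
  (u2 ^ 2 * p1 ^ 2 - u1 ^ 2 * p2 ^ 2) / (u1 ^ 2 - u2 ^ 2) - α * u1 ^ 2 * u2 ^ 2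
    - β * u1 ^ 2 * u2 ^ 2 / (u1 + u2) + γ * u1 * u2 / (u1 + u2)

/-! Rewriting the separated relations as `I₂ = uᵢ² I₁ - φ(uᵢ, pᵢ)` with
`φ(u, p) = p² - αu⁴ - βu³ - γu` shows that, as a function of the pair `(u₁, p₁)` alone,
`I₂` is an affine function `u₂² I₁ - φ(u₂, p₂)` of `I₁`, and symmetrically in `(u₂, p₂)`.
So each of the two Jacobian minors making up `{I₁, I₂}` vanishes, without ever
differentiating `I₁` or `I₂`. -/

open Filter Topology

theorem deriv_eq_const_mul_of_eventuallyEq {𝕜 : Type*} [NontriviallyNormedField 𝕜]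
    {f g : 𝕜 → 𝕜} {x c d : 𝕜} (h : g =ᶠ[𝓝 x] fun y => c * f y - d) :
    deriv g x = c * deriv f x := by
  rw [h.deriv_eq, deriv_sub_const, deriv_const_mul_field]

theorem poissonBracket_eq_zero_of_separated {F G : ℝ → ℝ → ℝ → ℝ → ℝ} {a : ℝ → ℝ}
    {φ : ℝ → ℝ → ℝ} {U : Set (ℝ × ℝ)} (hU : IsOpen U)
    (hsep₁ : ∀ u1 u2 p1 p2, (u1, u2) ∈ U → G u1 u2 p1 p2 = a u1 * F u1 u2 p1 p2 - φ u1 p1)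
    (hsep₂ : ∀ u1 u2 p1 p2, (u1, u2) ∈ U → G u1 u2 p1 p2 = a u2 * F u1 u2 p1 p2 - φ u2 p2)
    {u1 u2 p1 p2 : ℝ} (hu : (u1, u2) ∈ U) :
    poissonBracket F G u1 u2 p1 p2 = 0 := by
  have near_u1 : ∀ᶠ x in 𝓝 u1, (x, u2) ∈ U :=
    (continuous_id.prodMk continuous_const).continuousAt.eventually_mem (hU.mem_nhds hu)
  have near_u2 : ∀ᶠ x in 𝓝 u2, (u1, x) ∈ U :=
    (continuous_const.prodMk continuous_id).continuousAt.eventually_mem (hU.mem_nhds hu)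
  have dG_u1 : deriv (fun x => G x u2 p1 p2) u1 = a u2 * deriv (fun x => F x u2 p1 p2) u1 :=
    deriv_eq_const_mul_of_eventuallyEq (near_u1.mono fun x hx => hsep₂ x u2 p1 p2 hx)
  have dG_p1 : deriv (fun x => G u1 u2 x p2) p1 = a u2 * deriv (fun x => F u1 u2 x p2) p1 :=
    deriv_eq_const_mul_of_eventuallyEq (Eventually.of_forall fun x => hsep₂ u1 u2 x p2 hu)
  have dG_u2 : deriv (fun x => G u1 x p1 p2) u2 = a u1 * deriv (fun x => F u1 x p1 p2) u2 :=
    deriv_eq_const_mul_of_eventuallyEq (near_u2.mono fun x hx => hsep₁ u1 x p1 p2 hx)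
  have dG_p2 : deriv (fun x => G u1 u2 p1 x) p2 = a u1 * deriv (fun x => F u1 u2 p1 x) p2 :=
    deriv_eq_const_mul_of_eventuallyEq (Eventually.of_forall fun x => hsep₁ u1 u2 p1 x hu)
  rw [poissonBracket, dG_u1, dG_p1, dG_u2, dG_p2]
  ring

theorem add_ne_zero_of_sq_ne_sq {u1 u2 : ℝ} (hne : u1 ^ 2 ≠ u2 ^ 2) : u1 + u2 ≠ 0 := by
  rintro h
  exact hne (by rw [eq_neg_of_add_eq_zero_left h, neg_sq])

theorem drachI2_eq_left (α β γ : ℝ) {u1 u2 : ℝ} (p1 p2 : ℝ) (hne : u1 ^ 2 ≠ u2 ^ 2) :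
    drachI2 α β γ u1 u2 p1 p2 =
      u1 ^ 2 * drachI1 α β γ u1 u2 p1 p2 - (p1 ^ 2 - α * u1 ^ 4 - β * u1 ^ 3 - γ * u1) := by
  have hD : u1 ^ 2 - u2 ^ 2 ≠ 0 := sub_ne_zero.mpr hne
  have hsum := add_ne_zero_of_sq_ne_sq hne
  simp only [drachI1, drachI2]
  field_simp
  ring

theorem drachI2_eq_right (α β γ : ℝ) {u1 u2 : ℝ} (p1 p2 : ℝ) (hne : u1 ^ 2 ≠ u2 ^ 2) :
    drachI2 α β γ u1 u2 p1 p2 =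
      u2 ^ 2 * drachI1 α β γ u1 u2 p1 p2 - (p2 ^ 2 - α * u2 ^ 4 - β * u2 ^ 3 - γ * u2) := by
  have hD : u1 ^ 2 - u2 ^ 2 ≠ 0 := sub_ne_zero.mpr hne
  have hsum := add_ne_zero_of_sq_ne_sq hne
  simp only [drachI1, drachI2]
  field_simp
  ring

theorem drach_separated_and_commute_general (α β γ : ℝ) (u1 u2 p1 p2 : ℝ)
    (hne : u1 ^ 2 ≠ u2 ^ 2) :
    (p1 ^ 2 = α * u1 ^ 4 + β * u1 ^ 3 + drachI1 α β γ u1 u2 p1 p2 * u1 ^ 2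
        + γ * u1 - drachI2 α β γ u1 u2 p1 p2) ∧
    (p2 ^ 2 = α * u2 ^ 4 + β * u2 ^ 3 + drachI1 α β γ u1 u2 p1 p2 * u2 ^ 2
        + γ * u2 - drachI2 α β γ u1 u2 p1 p2) ∧
    poissonBracket (drachI1 α β γ) (drachI2 α β γ) u1 u2 p1 p2 = 0 := by
  refine ⟨?_, ?_, ?_⟩
  · linear_combination drachI2_eq_left α β γ p1 p2 hne
  · linear_combination drachI2_eq_right α β γ p1 p2 hne
  · have hU : IsOpen {q : ℝ × ℝ | q.1 ^ 2 ≠ q.2 ^ 2} :=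
      isOpen_ne_fun (by fun_prop) (by fun_prop)
    exact poissonBracket_eq_zero_of_separated (a := fun u => u ^ 2)
      (φ := fun u p => p ^ 2 - α * u ^ 4 - β * u ^ 3 - γ * u) hU
      (fun _ _ p1 p2 h => drachI2_eq_left α β γ p1 p2 h)
      (fun _ _ p1 p2 h => drachI2_eq_right α β γ p1 p2 h) hne

/-- The Drach (h) integrals satisfy the separated relations
`pᵢ² = αuᵢ⁴ + βuᵢ³ + I₁uᵢ² + γuᵢ - I₂` and Poisson-commute. -/
theorem drach_separated_and_commute (α β γ : ℝ) (u1 u2 p1 p2 : ℝ)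
    (hne : u1 ^ 2 ≠ u2 ^ 2) (hsum : u1 + u2 ≠ 0) :
    (p1 ^ 2 = α * u1 ^ 4 + β * u1 ^ 3 + drachI1 α β γ u1 u2 p1 p2 * u1 ^ 2
        + γ * u1 - drachI2 α β γ u1 u2 p1 p2) ∧
    (p2 ^ 2 = α * u2 ^ 4 + β * u2 ^ 3 + drachI1 α β γ u1 u2 p1 p2 * u2 ^ 2
        + γ * u2 - drachI2 α β γ u1 u2 p1 p2) ∧
    poissonBracket (drachI1 α β γ) (drachI2 α β γ) u1 u2 p1 p2 = 0 :=
  drach_separated_and_commute_general α β γ u1 u2 p1 p2 hne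
end

section
/- The symmetry-broken Drach integrals I₁ = (p₁²/m² − p₂²/n²)/(u₁² − u₂²) − α(u₁² + u₂²) − β(u₁² + u₁u₂ + u₂²)/(u₁ + u₂) − γ/(u₁ + u₂) and I₂ = (u₂²p₁²/m² − u₁²p₂²/n²)/(u₁² − u₂²) − αu₁²u₂² − βu₁²u₂²/(u₁ + u₂) + γu₁u₂/(u₁ + u₂) Poisson-commute for all nonzero constants m, n. -/
/-- Symmetry-broken Drach integral `I₁`. -/
noncomputable def drachI1mn (α β γ m n : ℝ) : ℝ → ℝ → ℝ → ℝ → ℝ := fun u1 u2 p1 p2 =>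
  (p1 ^ 2 / m ^ 2 - p2 ^ 2 / n ^ 2) / (u1 ^ 2 - u2 ^ 2) - α * (u1 ^ 2 + u2 ^ 2)
    - β * (u1 ^ 2 + u1 * u2 + u2 ^ 2) / (u1 + u2) - γ / (u1 + u2)

/-- Symmetry-broken Drach integral `I₂`. -/
noncomputable def drachI2mn (α β γ m n : ℝ) : ℝ → ℝ → ℝ → ℝ → ℝ := fun u1 u2 p1 p2 =>
  (u2 ^ 2 * p1 ^ 2 / m ^ 2 - u1 ^ 2 * p2 ^ 2 / n ^ 2) / (u1 ^ 2 - u2 ^ 2)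
    - α * u1 ^ 2 * u2 ^ 2 - β * u1 ^ 2 * u2 ^ 2 / (u1 + u2)
    + γ * u1 * u2 / (u1 + u2)

/-!
The Drach system is of Stäckel type: with `Aᵢ(u, p) = p² / cᵢ² - (α u⁴ + β u³ + γ u)`
(`c₁ = m`, `c₂ = n`) one has `I₂ = u₁² I₁ - A₁(u₁, p₁) = u₂² I₁ - A₂(u₂, p₂)` wherever
`u₁² ≠ u₂²`. Along the `(u₁, p₁)` directions `I₂` is thus `u₂² I₁` plus a constant, so the
`(u₁, p₁)` half of `{I₁, I₂}` is `u₂² (∂ᵤ₁I₁ ∂ₚ₁I₁ - ∂ₚ₁I₁ ∂ᵤ₁I₁) = 0`; likewise the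
`(u₂, p₂)` half vanishes with the factor `u₁²`. Only these relations enter, not any
differentiability: `deriv (fun x => c * f x - k) = c * deriv f` holds unconditionally.
-/

open Filter Topology

theorem add_ne_zero_of_sq_ne_sq_s15 {R : Type*} [Ring R] {a b : R} (h : a ^ 2 ≠ b ^ 2) :
    a + b ≠ 0 :=
  fun hab => h (by rw [eq_neg_of_add_eq_zero_left hab, neg_sq])

theorem deriv_eq_const_mul_deriv_of_eventuallyEq {𝕜 : Type*} [NontriviallyNormedField 𝕜]
    {f g : 𝕜 → 𝕜} {x c k : 𝕜}
    (h : ∀ᶠ t in 𝓝 x, g t = c * f t - k) : deriv g x = c * deriv f x := by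
  rw [Filter.EventuallyEq.deriv_eq h, deriv_sub_const, deriv_const_mul_field']

theorem poissonBracket_eq_zero_of_stackel {F G : ℝ → ℝ → ℝ → ℝ → ℝ} {φ₁ φ₂ : ℝ → ℝ}
    {A₁ A₂ : ℝ → ℝ → ℝ} {U : Set (ℝ × ℝ × ℝ × ℝ)} (hU : IsOpen U)
    (h₁ : ∀ x y p q, (x, y, p, q) ∈ U → G x y p q = φ₁ x * F x y p q - A₁ x p)
    (h₂ : ∀ x y p q, (x, y, p, q) ∈ U → G x y p q = φ₂ y * F x y p q - A₂ y q)
    {u1 u2 p1 p2 : ℝ} (hz : (u1, u2, p1, p2) ∈ U) :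
    poissonBracket F G u1 u2 p1 p2 = 0 := by
  have slice {g : ℝ → ℝ × ℝ × ℝ × ℝ} {t : ℝ} (hg : Continuous g) (ht : g t = (u1, u2, p1, p2)) :
      ∀ᶠ x in 𝓝 t, g x ∈ U :=
    hg.continuousAt.preimage_mem_nhds (ht ▸ hU.mem_nhds hz)
  have hu1 : deriv (fun x => G x u2 p1 p2) u1 = φ₂ u2 * deriv (fun x => F x u2 p1 p2) u1 :=
    deriv_eq_const_mul_deriv_of_eventuallyEq <|
      (slice (g := fun x => (x, u2, p1, p2)) (by fun_prop) rfl).mono fun x hx => h₂ _ _ _ _ hx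
  have hp1 : deriv (fun x => G u1 u2 x p2) p1 = φ₂ u2 * deriv (fun x => F u1 u2 x p2) p1 :=
    deriv_eq_const_mul_deriv_of_eventuallyEq <|
      (slice (g := fun x => (u1, u2, x, p2)) (by fun_prop) rfl).mono fun x hx => h₂ _ _ _ _ hx
  have hu2 : deriv (fun x => G u1 x p1 p2) u2 = φ₁ u1 * deriv (fun x => F u1 x p1 p2) u2 :=
    deriv_eq_const_mul_deriv_of_eventuallyEq <|
      (slice (g := fun x => (u1, x, p1, p2)) (by fun_prop) rfl).mono fun x hx => h₁ _ _ _ _ hx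
  have hp2 : deriv (fun x => G u1 u2 p1 x) p2 = φ₁ u1 * deriv (fun x => F u1 u2 p1 x) p2 :=
    deriv_eq_const_mul_deriv_of_eventuallyEq <|
      (slice (g := fun x => (u1, u2, p1, x)) (by fun_prop) rfl).mono fun x hx => h₁ _ _ _ _ hx
  rw [poissonBracket, hu1, hp1, hu2, hp2]
  ring

noncomputable def drachSeparated (α β γ c u p : ℝ) : ℝ :=
  p ^ 2 / c ^ 2 - (α * u ^ 4 + β * u ^ 3 + γ * u)

section Drach

variable {α β γ m n u1 u2 p1 p2 : ℝ}

theorem drachI2mn_eq_left (hne : u1 ^ 2 ≠ u2 ^ 2) :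
    drachI2mn α β γ m n u1 u2 p1 p2
      = u1 ^ 2 * drachI1mn α β γ m n u1 u2 p1 p2 - drachSeparated α β γ m u1 p1 := by
  have hD : u1 ^ 2 - u2 ^ 2 ≠ 0 := sub_ne_zero.mpr hne
  have hsum := add_ne_zero_of_sq_ne_sq_s15 hne
  simp only [drachI1mn, drachI2mn, drachSeparated]
  field_simp
  ring

theorem drachI2mn_eq_right (hne : u1 ^ 2 ≠ u2 ^ 2) :
    drachI2mn α β γ m n u1 u2 p1 p2
      = u2 ^ 2 * drachI1mn α β γ m n u1 u2 p1 p2 - drachSeparated α β γ n u2 p2 := by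
  have hD : u1 ^ 2 - u2 ^ 2 ≠ 0 := sub_ne_zero.mpr hne
  have hsum := add_ne_zero_of_sq_ne_sq_s15 hne
  simp only [drachI1mn, drachI2mn, drachSeparated]
  field_simp
  ring

end Drach

theorem drach_mn_integrals_commute_general (α β γ m n : ℝ)
    (u1 u2 p1 p2 : ℝ) (hne : u1 ^ 2 ≠ u2 ^ 2) :
    poissonBracket (drachI1mn α β γ m n) (drachI2mn α β γ m n) u1 u2 p1 p2 = 0 :=
  poissonBracket_eq_zero_of_stackel (φ₁ := (· ^ 2)) (φ₂ := (· ^ 2))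
    (A₁ := drachSeparated α β γ m) (A₂ := drachSeparated α β γ n)
    (isOpen_ne_fun (f := fun z : ℝ × ℝ × ℝ × ℝ => z.1 ^ 2) (g := fun z => z.2.1 ^ 2)
      (by fun_prop) (by fun_prop))
    (fun _ _ _ _ => drachI2mn_eq_left) (fun _ _ _ _ => drachI2mn_eq_right) hne

/-- The symmetry-broken Drach integrals Poisson-commute for all nonzero
constants `m`, `n`. -/
theorem drach_mn_integrals_commute (α β γ m n : ℝ) (hm : m ≠ 0) (hn : n ≠ 0)
    (u1 u2 p1 p2 : ℝ) (hne : u1 ^ 2 ≠ u2 ^ 2) (hsum : u1 + u2 ≠ 0) :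
    poissonBracket (drachI1mn α β γ m n) (drachI2mn α β γ m n) u1 u2 p1 p2 = 0 :=
  drach_mn_integrals_commute_general α β γ m n u1 u2 p1 p2 hne
end

section
/- Given three points (x₁,y₁), (x₂,y₂), (x₃,y₃) with pairwise distinct abscissas on the quartic curve y² = f(x), f(x) = a₄x⁴ + a₃x³ + a₂x² + a₁x + a₀ (characteristic ≠ 2), let P(x) = b₂x² + b₁x + b₀ be the Lagrange interpolating quadratic through the three points. If a₄ − b₂² ≠ 0, then f(x) − P(x)² = (a₄ − b₂²)(x − x₁)(x − x₂)(x − x₃)(x − x₄) with x₄ = −x₁ − x₂ − x₃ − (a₃ − 2b₁b₂)/(a₄ − b₂²), and the point (x₄, −P(x₄)) lies on the curve y² = f(x). -/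
/-!
The Abel polynomial `f - P²` is a quartic vanishing at the three abscissas `x₁, x₂, x₃`, so
it is `(a₄ - b₂²)(x - x₁)(x - x₂)(x - x₃)(x - x₄)`, the fourth root `x₄` being fixed by Vieta
from the two leading coefficients. Evaluating at `x₄` gives `f(x₄) = P(x₄)² = (-P(x₄))²`.
-/

/-- Subtracting `c₄ (x - x₁)(x - x₂)(x - x₃)(x - x₄)` from the quartic leaves a quadratic
vanishing at three distinct points; the certificate below is its Lagrange interpolation. -/
theorem quartic_eq_mul_of_three_roots {K : Type*} [Field K] (c4 c3 c2 c1 c0 : K)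
    {x1 x2 x3 x4 : K} (h12 : x1 ≠ x2) (h13 : x1 ≠ x3) (h23 : x2 ≠ x3) (hc4 : c4 ≠ 0)
    (hr1 : c4 * x1 ^ 4 + c3 * x1 ^ 3 + c2 * x1 ^ 2 + c1 * x1 + c0 = 0)
    (hr2 : c4 * x2 ^ 4 + c3 * x2 ^ 3 + c2 * x2 ^ 2 + c1 * x2 + c0 = 0)
    (hr3 : c4 * x3 ^ 4 + c3 * x3 ^ 3 + c2 * x3 ^ 2 + c1 * x3 + c0 = 0)
    (hx4 : x4 = -x1 - x2 - x3 - c3 / c4) (x : K) :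
    c4 * x ^ 4 + c3 * x ^ 3 + c2 * x ^ 2 + c1 * x + c0
      = c4 * (x - x1) * (x - x2) * (x - x3) * (x - x4) := by
  have hvieta : c4 * x4 = c4 * (-x1 - x2 - x3) - c3 := by
    rw [hx4]; field_simp
  have hvdm : (x1 - x2) * (x1 - x3) * (x2 - x3) ≠ 0 := by
    simp only [ne_eq, mul_eq_zero, sub_eq_zero, not_or]
    exact ⟨⟨h12, h13⟩, h23⟩
  apply mul_left_cancel₀ hvdm
  linear_combination
    (x - x2) * (x - x3) * (x2 - x3) * hr1 - (x - x1) * (x - x3) * (x1 - x3) * hr2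
      + (x - x1) * (x - x2) * (x1 - x2) * hr3
      + (x1 - x2) * (x1 - x3) * (x2 - x3) * (x - x1) * (x - x2) * (x - x3) * hvieta

theorem abel_three_point_addition_general {K : Type*} [Field K]
    (a4 a3 a2 a1 a0 : K) (x1 y1 x2 y2 x3 y3 b2 b1 b0 : K)
    (h12 : x1 ≠ x2) (h13 : x1 ≠ x3) (h23 : x2 ≠ x3)
    (hy1 : y1 ^ 2 = a4 * x1 ^ 4 + a3 * x1 ^ 3 + a2 * x1 ^ 2 + a1 * x1 + a0)
    (hy2 : y2 ^ 2 = a4 * x2 ^ 4 + a3 * x2 ^ 3 + a2 * x2 ^ 2 + a1 * x2 + a0)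
    (hy3 : y3 ^ 2 = a4 * x3 ^ 4 + a3 * x3 ^ 3 + a2 * x3 ^ 2 + a1 * x3 + a0)
    (hP1 : b2 * x1 ^ 2 + b1 * x1 + b0 = y1)
    (hP2 : b2 * x2 ^ 2 + b1 * x2 + b0 = y2)
    (hP3 : b2 * x3 ^ 2 + b1 * x3 + b0 = y3)
    (hlead : a4 - b2 ^ 2 ≠ 0)
    (x4 : K) (hx4 : x4 = -x1 - x2 - x3 - (a3 - 2 * b1 * b2) / (a4 - b2 ^ 2)) :
    (∀ x : K,
      (a4 * x ^ 4 + a3 * x ^ 3 + a2 * x ^ 2 + a1 * x + a0)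
          - (b2 * x ^ 2 + b1 * x + b0) ^ 2
        = (a4 - b2 ^ 2) * (x - x1) * (x - x2) * (x - x3) * (x - x4)) ∧
    (-(b2 * x4 ^ 2 + b1 * x4 + b0)) ^ 2
        = a4 * x4 ^ 4 + a3 * x4 ^ 3 + a2 * x4 ^ 2 + a1 * x4 + a0 := by
  subst hP1 hP2 hP3
  have hfactor (x : K) := quartic_eq_mul_of_three_roots (a4 - b2 ^ 2) (a3 - 2 * b1 * b2)
    (a2 - b1 ^ 2 - 2 * b0 * b2) (a1 - 2 * b0 * b1) (a0 - b0 ^ 2) h12 h13 h23 hlead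
    (by linear_combination -hy1) (by linear_combination -hy2) (by linear_combination -hy3) hx4 x
  refine ⟨fun x => by linear_combination hfactor x, ?_⟩
  linear_combination -hfactor x4

/-- Genus-one addition of three points by a swinging parabola: with `P` the
Lagrange interpolating quadratic through three points with pairwise distinct
abscissas on the quartic curve `y² = f(x)`, and `a₄ - b₂² ≠ 0`, the Abel
polynomial `f - P²` factors through the four abscissas, the fourth one given
by Vieta, and `(x₄, -P(x₄))` lies on the curve. -/
theorem abel_three_point_addition {K : Type*} [Field K] (h2 : (2 : K) ≠ 0)
    (a4 a3 a2 a1 a0 : K) (x1 y1 x2 y2 x3 y3 b2 b1 b0 : K)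
    (h12 : x1 ≠ x2) (h13 : x1 ≠ x3) (h23 : x2 ≠ x3)
    (hy1 : y1 ^ 2 = a4 * x1 ^ 4 + a3 * x1 ^ 3 + a2 * x1 ^ 2 + a1 * x1 + a0)
    (hy2 : y2 ^ 2 = a4 * x2 ^ 4 + a3 * x2 ^ 3 + a2 * x2 ^ 2 + a1 * x2 + a0)
    (hy3 : y3 ^ 2 = a4 * x3 ^ 4 + a3 * x3 ^ 3 + a2 * x3 ^ 2 + a1 * x3 + a0)
    (hP1 : b2 * x1 ^ 2 + b1 * x1 + b0 = y1)
    (hP2 : b2 * x2 ^ 2 + b1 * x2 + b0 = y2)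
    (hP3 : b2 * x3 ^ 2 + b1 * x3 + b0 = y3)
    (hlead : a4 - b2 ^ 2 ≠ 0)
    (x4 : K) (hx4 : x4 = -x1 - x2 - x3 - (a3 - 2 * b1 * b2) / (a4 - b2 ^ 2)) :
    (∀ x : K,
      (a4 * x ^ 4 + a3 * x ^ 3 + a2 * x ^ 2 + a1 * x + a0)
          - (b2 * x ^ 2 + b1 * x + b0) ^ 2
        = (a4 - b2 ^ 2) * (x - x1) * (x - x2) * (x - x3) * (x - x4)) ∧
    (-(b2 * x4 ^ 2 + b1 * x4 + b0)) ^ 2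
        = a4 * x4 ^ 4 + a3 * x4 ^ 3 + a2 * x4 ^ 2 + a1 * x4 + a0 :=
  abel_three_point_addition_general a4 a3 a2 a1 a0 x1 y1 x2 y2 x3 y3 b2 b1 b0 h12 h13 h23 hy1 hy2
    hy3 hP1 hP2 hP3 hlead x4 hx4
end
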